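/- There is exactly one (2,6)-admissible datum, namely g' = 0, N = 2, d_1 = 6, a_1 = 6. (This is the paper's count 'only one for n = 6', corresponding to the twisted sector τ_{111111}, the hyperelliptic locus with all six Weierstrass points marked.) -/

import Mathlib

/-!
A marked point has stabiliser the whole cyclic group, so it contributes `N - 1` to the
ramification term of Riemann–Hurwitz, and every other branch point contributes a nonnegative
amount; hence `2g - 2 ≥ -2N + n(N - 1)`. For `g = 2`, `n = 6` this forces `N = 2`; then
Riemann–Hurwitz reads `6 = 4g' + d₁` while `d₁ ≥ a₁ = 6`, so `g' = 0` and `d₁ = 6`. The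
hyperelliptic datum realises these values.
-/

/-- A `(g,n)`-admissible datum (Definition 2.2 of the paper): a tuple
`(g', N, d₁, …, d_{N−1}, a₁, …, a_{N−1})` of natural numbers with `N ≥ 2`,
where `d` and `a` are encoded as functions `ℕ → ℕ` vanishing outside `{1, …, N−1}`,
satisfying the Riemann–Hurwitz formula, the congruence `Σ i·dᵢ ≡ 0 (mod N)`,
`Σ aᵢ = n`, `aᵢ ≤ dᵢ`, and `aᵢ = 0` whenever `gcd(i, N) ≠ 1`. -/
structure AdmissibleDatum (g n : ℕ) where
  g' : ℕ
  N : ℕ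
  hN : 2 ≤ N
  d : ℕ → ℕ
  a : ℕ → ℕ
  hd : ∀ i : ℕ, i ∉ Finset.Ico 1 N → d i = 0
  ha : ∀ i : ℕ, i ∉ Finset.Ico 1 N → a i = 0
  hRH : (2 * (g : ℤ) - 2) = (N : ℤ) * (2 * (g' : ℤ) - 2) +
      ∑ i ∈ Finset.Ico 1 N,
        (d i : ℤ) * (Nat.gcd i N : ℤ) * (((N / Nat.gcd i N : ℕ) : ℤ) - 1)
  hmod : ((∑ i ∈ Finset.Ico 1 N, i * d i : ℕ) : ZMod N) = 0
  hsum : ∑ i ∈ Finset.Ico 1 N, a i = n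
  hle : ∀ i : ℕ, a i ≤ d i
  hcop : ∀ i : ℕ, Nat.gcd i N ≠ 1 → a i = 0

namespace AdmissibleDatum

variable {g n : ℕ}

theorem ext_of_eqOn_Ico {A B : AdmissibleDatum g n} (hg' : A.g' = B.g') (hN : A.N = B.N)
    (hd : ∀ i ∈ Finset.Ico 1 A.N, A.d i = B.d i) (ha : ∀ i ∈ Finset.Ico 1 A.N, A.a i = B.a i) :
    A = B := by
  have hd' : A.d = B.d := funext fun i => by
    by_cases hi : i ∈ Finset.Ico 1 A.N
    · exact hd i hi
    · rw [A.hd i hi, B.hd i (hN ▸ hi)]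
  have ha' : A.a = B.a := funext fun i => by
    by_cases hi : i ∈ Finset.Ico 1 A.N
    · exact ha i hi
    · rw [A.ha i hi, B.ha i (hN ▸ hi)]
  cases A
  cases B
  subst hg' hN hd' ha'
  rfl

variable (A : AdmissibleDatum g n)

theorem a_mul_le_ramification (i : ℕ) :
    (A.a i : ℤ) * (A.N - 1) ≤
      (A.d i : ℤ) * (Nat.gcd i A.N : ℤ) * (((A.N / Nat.gcd i A.N : ℕ) : ℤ) - 1) := by
  have hN := A.hN
  by_cases hcop : Nat.gcd i A.N = 1
  · rw [hcop, Nat.div_one, Nat.cast_one, mul_one]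
    exact mul_le_mul_of_nonneg_right (by exact_mod_cast A.hle i) (by omega)
  · have hgcd_pos : 0 < Nat.gcd i A.N := Nat.gcd_pos_of_pos_right _ (by omega)
    have hquot_pos : 0 < A.N / Nat.gcd i A.N :=
      Nat.div_pos (Nat.gcd_le_right _ (by omega)) hgcd_pos
    rw [A.hcop i hcop, Nat.cast_zero, zero_mul]
    exact mul_nonneg (by positivity) (by omega)

theorem n_mul_le_ramification :
    (n : ℤ) * (A.N - 1) ≤ ∑ i ∈ Finset.Ico 1 A.N,
      (A.d i : ℤ) * (Nat.gcd i A.N : ℤ) * (((A.N / Nat.gcd i A.N : ℕ) : ℤ) - 1) := by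
  calc (n : ℤ) * (A.N - 1) = ∑ i ∈ Finset.Ico 1 A.N, (A.a i : ℤ) * (A.N - 1) := by
        rw [← Finset.sum_mul, ← Nat.cast_sum, A.hsum]
    _ ≤ _ := Finset.sum_le_sum fun i _ => A.a_mul_le_ramification i

theorem sub_two_mul_N_le : ((n : ℤ) - 2) * A.N ≤ 2 * g + n - 2 := by
  have := A.hRH
  have := A.n_mul_le_ramification
  nlinarith [mul_nonneg (Nat.cast_nonneg (α := ℤ) A.N) (Nat.cast_nonneg (α := ℤ) A.g')]

theorem riemannHurwitz_of_N_eq_two (hN : A.N = 2) : 2 * g + 2 = 4 * A.g' + A.d 1 := by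
  have hRH := A.hRH
  rw [hN] at hRH
  simp only [Nat.Ico_succ_singleton, Finset.sum_singleton] at hRH
  norm_num at hRH
  omega

theorem a_one_of_N_eq_two (hN : A.N = 2) : A.a 1 = n := by
  simpa [hN] using A.hsum

end AdmissibleDatum

/-- The hyperelliptic involution: quotient `ℙ¹`, with `2g + 2` fixed points of which `n` are
marked. -/
def AdmissibleDatum.hyperelliptic (g n : ℕ) (hn : n ≤ 2 * g + 2) : AdmissibleDatum g n where
  g' := 0
  N := 2
  hN := le_rfl
  d i := if i = 1 then 2 * g + 2 else 0
  a i := if i = 1 then n else 0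
  hd i hi := if_neg (by rintro rfl; simp at hi)
  ha i hi := if_neg (by rintro rfl; simp at hi)
  hRH := by simp; ring
  hmod := by
    simp only [Nat.Ico_succ_singleton, Finset.sum_singleton, if_true, one_mul]
    exact (ZMod.natCast_eq_zero_iff_even).mpr ⟨g + 1, by ring⟩
  hsum := by simp
  hle i := by split_ifs <;> omega
  hcop i h := if_neg (by rintro rfl; simp at h)

/-- There is exactly one `(2,6)`-admissible datum, namely `g' = 0`, `N = 2`, `d 1 = 6`,
`a 1 = 6`. -/
theorem admissibleDatum_two_six_unique :
    Nat.card (AdmissibleDatum 2 6) = 1 ∧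
    ∀ A : AdmissibleDatum 2 6, A.g' = 0 ∧ A.N = 2 ∧ A.d 1 = 6 ∧ A.a 1 = 6 := by
  have characterize (A : AdmissibleDatum 2 6) :
      A.g' = 0 ∧ A.N = 2 ∧ A.d 1 = 6 ∧ A.a 1 = 6 := by
    have hN : A.N = 2 := by
      have := A.sub_two_mul_N_le
      have := A.hN
      omega
    have hRH := A.riemannHurwitz_of_N_eq_two hN
    have ha := A.a_one_of_N_eq_two hN
    have := A.hle 1
    omega
  refine ⟨?_, characterize⟩
  have : Subsingleton (AdmissibleDatum 2 6) := ⟨fun A B => by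
    obtain ⟨hA, hNA, hdA, haA⟩ := characterize A
    obtain ⟨hB, hNB, hdB, haB⟩ := characterize B
    refine AdmissibleDatum.ext_of_eqOn_Ico (hA.trans hB.symm) (hNA.trans hNB.symm) ?_ ?_ <;>
      simp [hNA, hdA, hdB, haA, haB]⟩
  have : Nonempty (AdmissibleDatum 2 6) := ⟨.hyperelliptic 2 6 (by norm_num)⟩
  exact Nat.card_unique
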